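/- arXiv:2601.07561 — 2 statements merged into one kernel-verified Lean document; each statement's English description precedes it below -/
import Mathlib

section
/- Let 1 < p < ∞, let ρ be a weight on L(G), M ≥ 1 and w ∈ ℝ, and assume that for all i ∈ I, all t ≥ 0, and almost every s ∈ [0,1] one has (Σ_{j∈M_{n(t,s)}(i)} ρ_j(s+t−n(t,s))^{−1/(p−1)})^{p−1} ≤ M^p e^{pwt} / ρ_i(s). Then for every t ≥ 0 and every f ∈ L^p_ρ(L(G)), the translated family T_t f belongs to L^p_ρ(L(G)) and ‖T_t f‖_{p,ρ} ≤ M e^{wt} ‖f‖_{p,ρ}. -/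
open MeasureTheory ENNReal Filter

noncomputable section

variable {I : Type*}

/-- The `n`-fold iterate of the parent map `P : I → Option I` of a directed metric tree,
encoded on the set of edges `I`. -/
def pIter (P : I → Option I) : ℕ → I → Option I
  | 0, j => some j
  | n + 1, j => (P j).bind (pIter P n)

/-- `Mset P n i` is the set of edges reachable from the edge `i` in `n` steps,
i.e. `M_n(i) = {j | P^[n] j = some i}`; `Mset P 0 i = {i}`. -/
def Mset (P : I → Option I) (n : ℕ) (i : I) : Set I := {j | pIter P n j = some i}

/-- `nfl t s = ⌊s + t⌋ ∈ ℕ`. -/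
def nfl (t s : ℝ) : ℕ := ⌊s + t⌋₊

/-- The left translation `T_t` on families of functions on the edges:
`(T_t f)_i (s) = ∑_{j ∈ M_{n(t,s)}(i)} f_j (t + s - n(t,s))`. -/
def Tleft (P : I → Option I) (f : I → ℝ → ℝ) (t : ℝ) (i : I) (s : ℝ) : ℝ :=
  ∑' j : Mset P (nfl t s) i, f (j : I) (t + s - (nfl t s : ℝ))

/-- The `p`-th power of the norm of a family `f` in `L^p_ρ(L(G))`:
`‖f‖_{p,ρ}^p = ∑_{i ∈ I} ∫_0^1 |f_i(s)|^p ρ_i(s) ds`, with values in `[0,∞]`. -/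
def pnorm (ρ : I → ℝ → ℝ) (p : ℝ) (f : I → ℝ → ℝ) : ℝ≥0∞ :=
  ∑' i, ∫⁻ s in Set.Icc (0 : ℝ) 1, ENNReal.ofReal (|f i s| ^ p * ρ i s)

/-- Membership in `L^p_ρ(L(G))`: each component is (a.e.) measurable on `[0,1]` and the
`ℓ^p`-direct sum norm is finite. -/
def memLprho (ρ : I → ℝ → ℝ) (p : ℝ) (f : I → ℝ → ℝ) : Prop :=
  (∀ i, AEMeasurable (f i) (volume.restrict (Set.Icc (0 : ℝ) 1))) ∧ pnorm ρ p f < ⊤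

/-- The norm `‖f‖_{p,ρ}` in `L^p_ρ(L(G))`, with values in `[0,∞]`. -/
def enorm' (ρ : I → ℝ → ℝ) (p : ℝ) (f : I → ℝ → ℝ) : ℝ≥0∞ := pnorm ρ p f ^ (1 / p)

/-- The distance `‖f - g‖_{p,ρ}` in `L^p_ρ(L(G))`, with values in `[0,∞]`. -/
def pdist (ρ : I → ℝ → ℝ) (p : ℝ) (f g : I → ℝ → ℝ) : ℝ≥0∞ :=
  enorm' ρ p fun i s => f i s - g i s

/-- A weight on `L(G)`: a family of integrable functions on `[0,1]`, strictly positive a.e. -/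
structure IsWeight (ρ : I → ℝ → ℝ) : Prop where
  integrable : ∀ i, IntegrableOn (ρ i) (Set.Icc (0 : ℝ) 1)
  pos : ∀ i, ∀ᵐ s ∂(volume.restrict (Set.Icc (0 : ℝ) 1)), 0 < ρ i s

/-- The `1`-admissibility condition (everywhere on `[0,1]`) with constants `M, w`:
`ρ_i(s) ≤ M e^{wt} inf_{j ∈ M_{n(t,s)}(i)} ρ_j(s+t-n(t,s))`, the infimum (in `[0,∞]`)
over the empty set being `+∞`. -/
def Admissible1 (P : I → Option I) (ρ : I → ℝ → ℝ) (M w : ℝ) : Prop :=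
  ∀ i, ∀ t ≥ (0 : ℝ), ∀ s ∈ Set.Icc (0 : ℝ) 1,
    ENNReal.ofReal (ρ i s) ≤ ENNReal.ofReal (M * Real.exp (w * t)) *
      ⨅ j : Mset P (nfl t s) i, ENNReal.ofReal (ρ (j : I) (s + t - (nfl t s : ℝ)))

/-- The `p`-admissibility condition (`1 < p < ∞`, everywhere on `[0,1]`) with constants `M, w`:
`(∑_{j ∈ M_{n(t,s)}(i)} ρ_j(s+t-n(t,s))^{-1/(p-1)})^{p-1} ≤ M^p e^{pwt} / ρ_i(s)`,
the sum being taken in `[0,∞]`. -/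
def AdmissibleP (P : I → Option I) (ρ : I → ℝ → ℝ) (p M w : ℝ) : Prop :=
  ∀ i, ∀ t ≥ (0 : ℝ), ∀ s ∈ Set.Icc (0 : ℝ) 1,
    (∑' j : Mset P (nfl t s) i,
        ENNReal.ofReal ((ρ (j : I) (s + t - (nfl t s : ℝ))) ^ (-(1 / (p - 1))))) ^ (p - 1)
      ≤ ENNReal.ofReal (M ^ p * Real.exp (p * w * t) / ρ i s)

/-- `p`-admissibility, `1 ≤ p < ∞`. -/
def Admissible (P : I → Option I) (ρ : I → ℝ → ℝ) (p M w : ℝ) : Prop :=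
  (p = 1 → Admissible1 P ρ M w) ∧ (1 < p → AdmissibleP P ρ p M w)


/-! The `p`-admissibility bound is exactly what Hölder's inequality with the weights `ρ_j`
needs: pointwise, `|(T_t f)_i(s)|^p ρ_i(s) ≤ M^p e^{pwt} ∑_{j ∈ M_n(i)} |f_j|^p ρ_j`
evaluated at `s + t - n`, where `n = ⌊s + t⌋`. For fixed `t`, `n` only takes the values `⌊t⌋`
and `⌊t⌋ + 1` on `[0, 1)`, and `s ↦ s + t - n` maps the two pieces by translations onto
`[fract t, 1)` and `[0, fract t)`. Since every edge has at most one `n`-th ancestor, the sets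
`M_n(i)` are disjoint, so summing over `i` and integrating gives
`‖T_t f‖^p ≤ M^p e^{pwt} ‖f‖^p`. -/

open Set

namespace ENNReal

theorem tsum_mul_le_Lp_mul_Lq {J : Type*} {p q : ℝ} (hpq : p.HolderConjugate q)
    (f g : J → ℝ≥0∞) :
    ∑' j, f j * g j ≤ (∑' j, f j ^ p) ^ (1 / p) * (∑' j, g j ^ q) ^ (1 / q) := by
  let _ : MeasurableSpace J := ⊤
  simpa only [Pi.mul_apply, lintegral_count] using
    lintegral_mul_le_Lp_mul_Lq (Measure.count : Measure J) hpq
      measurable_from_top.aemeasurable measurable_from_top.aemeasurable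

theorem ofReal_abs_tsum_rpow_le {J : Type*} {p : ℝ} (hp : 1 < p) (g r : J → ℝ)
    (hr : ∀ j, 0 < r j) :
    ENNReal.ofReal (|∑' j, g j| ^ p) ≤
      (∑' j, ENNReal.ofReal (|g j| ^ p * r j)) *
        (∑' j, ENNReal.ofReal (r j ^ (-(1 / (p - 1))))) ^ (p - 1) := by
  have hp0 : 0 < p := zero_lt_one.trans hp
  set q := p.conjExponent
  have hpq : p.HolderConjugate q := .conjExponent hp
  have hq : 1 / q = (p - 1) / p := by
    simp only [q, Real.conjExponent]
    field_simp
  set a : J → ℝ≥0∞ := fun j => ENNReal.ofReal (|g j| ^ p * r j)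
  set b : J → ℝ≥0∞ := fun j => ENNReal.ofReal (r j ^ (-(1 / (p - 1))))
  have factor : ∀ j, ENNReal.ofReal |g j| = a j ^ (1 / p) * b j ^ (1 / q) := by
    intro j
    have hrj := hr j
    have hexp : -(1 / (p - 1)) * (1 / q) = -(1 / p) := by
      rw [hq]
      field_simp
      rw [div_self (by linarith)]
    rw [ofReal_rpow_of_nonneg (by positivity) (by positivity),
      ofReal_rpow_of_nonneg (by positivity)
        (by rw [hq]; exact div_nonneg (by linarith) hp0.le),
      ← ofReal_mul (by positivity), Real.mul_rpow (by positivity) hrj.le,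
      ← Real.rpow_mul (abs_nonneg _), mul_one_div_cancel hp0.ne', Real.rpow_one,
      ← Real.rpow_mul hrj.le, hexp, mul_assoc, ← Real.rpow_add hrj, add_neg_cancel,
      Real.rpow_zero, mul_one]
  have holder : ENNReal.ofReal |∑' j, g j| ≤ (∑' j, a j) ^ (1 / p) * (∑' j, b j) ^ (1 / q) :=
    calc ENNReal.ofReal |∑' j, g j| ≤ ∑' j, ENNReal.ofReal |g j| := by
          simpa only [Real.enorm_eq_ofReal_abs] using enorm_tsum_le_tsum_enorm (f := g)
      _ = ∑' j, a j ^ (1 / p) * b j ^ (1 / q) := tsum_congr factor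
      _ ≤ (∑' j, a j) ^ (1 / p) * (∑' j, b j) ^ (1 / q) := by
          simpa only [← rpow_mul, one_div_mul_cancel hp0.ne',
            one_div_mul_cancel hpq.symm.ne_zero, rpow_one]
            using tsum_mul_le_Lp_mul_Lq hpq (fun j => a j ^ (1 / p))
              (fun j => b j ^ (1 / q))
  calc ENNReal.ofReal (|∑' j, g j| ^ p) = ENNReal.ofReal |∑' j, g j| ^ p :=
        (ofReal_rpow_of_nonneg (abs_nonneg _) hp0.le).symm
    _ ≤ ((∑' j, a j) ^ (1 / p) * (∑' j, b j) ^ (1 / q)) ^ p := rpow_le_rpow holder hp0.le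
    _ = (∑' j, a j) * (∑' j, b j) ^ (p - 1) := by
        rw [mul_rpow_of_nonneg _ _ hp0.le, ← rpow_mul, ← rpow_mul, one_div_mul_cancel hp0.ne',
          rpow_one, hq, div_mul_cancel₀ _ hp0.ne']

theorem ofReal_abs_tsum_rpow_mul_le {J : Type*} {p : ℝ} (hp : 1 < p) (g r : J → ℝ)
    (hr : ∀ j, 0 < r j) {r₀ K : ℝ} (hr₀ : 0 < r₀) (hK : 0 ≤ K)
    (hadm : (∑' j, ENNReal.ofReal (r j ^ (-(1 / (p - 1))))) ^ (p - 1) ≤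
      ENNReal.ofReal (K / r₀)) :
    ENNReal.ofReal (|∑' j, g j| ^ p * r₀) ≤
      ENNReal.ofReal K * ∑' j, ENNReal.ofReal (|g j| ^ p * r j) :=
  calc ENNReal.ofReal (|∑' j, g j| ^ p * r₀)
      = ENNReal.ofReal (|∑' j, g j| ^ p) * ENNReal.ofReal r₀ := ofReal_mul (by positivity)
    _ ≤ (∑' j, ENNReal.ofReal (|g j| ^ p * r j)) * ENNReal.ofReal (K / r₀) *
          ENNReal.ofReal r₀ :=
        mul_le_mul_left (ofReal_abs_tsum_rpow_le hp g r hr |>.trans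
          (mul_le_mul_right hadm _)) _
    _ = ENNReal.ofReal K * ∑' j, ENNReal.ofReal (|g j| ^ p * r j) := by
        rw [mul_assoc, ← ofReal_mul (by positivity), div_mul_cancel₀ _ hr₀.ne', mul_comm]

end ENNReal

theorem restrict_Icc_eq_restrict_Ico_union {μ : Measure ℝ} [NullSingletonClass μ] {a b c : ℝ}
    (hab : a ≤ b) (hbc : b ≤ c) : μ.restrict (Icc a c) = μ.restrict (Ico a b ∪ Ico b c) := by
  rw [Ico_union_Ico_eq_Ico hab hbc, restrict_Ico_eq_restrict_Icc]

theorem setLIntegral_Icc_eq_add {μ : Measure ℝ} [NullSingletonClass μ] {a b c : ℝ}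
    (hab : a ≤ b) (hbc : b ≤ c) (F : ℝ → ℝ≥0∞) :
    ∫⁻ x in Icc a c, F x ∂μ = ∫⁻ x in Ico a b, F x ∂μ + ∫⁻ x in Ico b c, F x ∂μ := by
  rw [restrict_Icc_eq_restrict_Ico_union hab hbc, lintegral_union measurableSet_Ico
    Ico_disjoint_Ico_same]

section Fract

variable {t : ℝ}

theorem natFloor_add_fract (ht : 0 ≤ t) : (⌊t⌋₊ : ℝ) + Int.fract t = t := by
  rw [natCast_floor_eq_intCast_floor ht, Int.floor_add_fract]

theorem preimage_add_fract_Ico (t : ℝ) :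
    (· + Int.fract t) ⁻¹' Ico (Int.fract t) 1 = Ico 0 (1 - Int.fract t) := by
  rw [preimage_add_const_Ico, sub_self]

theorem preimage_add_fract_sub_one_Ico (t : ℝ) :
    (· + (Int.fract t - 1)) ⁻¹' Ico 0 (Int.fract t) = Ico (1 - Int.fract t) 1 := by
  rw [preimage_add_const_Ico]
  congr 1 <;> ring

theorem nfl_eq_natFloor (ht : 0 ≤ t) :
    ∀ s ∈ (· + Int.fract t) ⁻¹' Ico (Int.fract t) 1, nfl t s = ⌊t⌋₊ := by
  rw [preimage_add_fract_Ico]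
  rintro s ⟨hs₀, hs₁⟩
  have := natFloor_add_fract ht
  have := Int.fract_nonneg t
  exact (Nat.floor_eq_iff (by linarith)).2 ⟨by linarith, by linarith⟩

theorem nfl_eq_natFloor_add_one (ht : 0 ≤ t) :
    ∀ s ∈ (· + (Int.fract t - 1)) ⁻¹' Ico 0 (Int.fract t), nfl t s = ⌊t⌋₊ + 1 := by
  rw [preimage_add_fract_sub_one_Ico]
  rintro s ⟨hs₀, hs₁⟩
  have := natFloor_add_fract ht
  have := Int.fract_lt_one t
  have := Int.fract_nonneg t
  exact (Nat.floor_eq_iff (by linarith)).2 ⟨by push_cast; linarith,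
    by push_cast; linarith⟩

end Fract

theorem tsum_tsum_Mset_le (P : I → Option I) (n : ℕ) (g : I → ℝ≥0∞) :
    ∑' i, ∑' j : Mset P n i, g j ≤ ∑' j, g j := by
  rw [← ENNReal.tsum_sigma' fun x : Σ i, Mset P n i => g x.2]
  refine ENNReal.tsum_comp_le_tsum_of_injective
    (f := fun x : Σ i, Mset P n i => (x.2 : I)) ?_ g
  rintro ⟨i₁, j, hj₁⟩ ⟨i₂, _, hj₂⟩ rfl
  cases hj₁.symm.trans hj₂
  rfl

section Pieces

variable (P : I → Option I) {f ρ : I → ℝ → ℝ} {p t c K : ℝ} {n : ℕ} {S : Set ℝ}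

theorem Tleft_eq_tsum_of_nfl_eq (hc : (n : ℝ) + c = t) {s : ℝ} (hs : nfl t s = n) (i : I) :
    Tleft P f t i s = ∑' j : Mset P n i, f j (s + c) := by
  rw [Tleft, hs, show t + s - n = s + c by linarith]

variable [Countable I]

theorem aemeasurable_Tleft_of_nfl_eq (hS : MeasurableSet S)
    (hf : ∀ j, AEMeasurable (f j) (volume.restrict S)) (hc : (n : ℝ) + c = t)
    (hn : ∀ s ∈ (· + c) ⁻¹' S, nfl t s = n) (i : I) :
    AEMeasurable (Tleft P f t i) (volume.restrict ((· + c) ⁻¹' S)) := by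
  have hshift := (measurePreserving_add_right volume c).restrict_preimage hS
  refine (AEMeasurable.tsum (L := .unconditional _) (f := fun (j : Mset P n i) s => f j (s + c))
    fun j => (hf j).comp_quasiMeasurePreserving hshift.quasiMeasurePreserving).congr ?_
  filter_upwards [ae_restrict_mem (hS.preimage (measurable_add_const c))] with s hs
  exact (Tleft_eq_tsum_of_nfl_eq P hc (hn s hs) i).symm

theorem lintegral_Tleft_le_of_nfl_eq (hp : 1 < p) (hρ : IsWeight ρ) (hK : 0 ≤ K)
    (hf : ∀ j, AEMeasurable (f j) (volume.restrict (Icc 0 1)))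
    (hS : MeasurableSet S) (hS₁ : S ⊆ Icc 0 1) (hA₁ : (· + c) ⁻¹' S ⊆ Icc 0 1)
    (hc : (n : ℝ) + c = t) (hn : ∀ s ∈ (· + c) ⁻¹' S, nfl t s = n) (i : I)
    (hadm : ∀ᵐ s ∂(volume.restrict (Icc (0 : ℝ) 1)),
      (∑' j : Mset P (nfl t s) i,
          ENNReal.ofReal ((ρ (j : I) (s + t - (nfl t s : ℝ))) ^ (-(1 / (p - 1))))) ^ (p - 1)
        ≤ ENNReal.ofReal (K / ρ i s)) :
    ∫⁻ s in (· + c) ⁻¹' S, ENNReal.ofReal (|Tleft P f t i s| ^ p * ρ i s) ≤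
      ENNReal.ofReal K *
        ∑' j : Mset P n i, ∫⁻ x in S, ENNReal.ofReal (|f j x| ^ p * ρ j x) := by
  set A := (· + c) ⁻¹' S
  have hshift := (measurePreserving_add_right volume c).restrict_preimage hS
  have hmeas : ∀ j, AEMeasurable (fun x => ENNReal.ofReal (|f j x| ^ p * ρ j x))
      (volume.restrict S) := fun j =>
    (((hf j).mono_set hS₁).abs.pow_const p |>.mul
      ((hρ.integrable j).aemeasurable.mono_set hS₁)).ennreal_ofReal
  have hpos : ∀ᵐ s ∂volume.restrict A, ∀ j, 0 < ρ j (s + c) :=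
    ae_all_iff.2 fun j => hshift.quasiMeasurePreserving.ae
      (ae_restrict_of_ae_restrict_of_subset hS₁ (hρ.pos j))
  have hpointwise : ∀ᵐ s ∂volume.restrict A,
      ENNReal.ofReal (|Tleft P f t i s| ^ p * ρ i s) ≤
        ENNReal.ofReal K *
          ∑' j : Mset P n i, ENNReal.ofReal (|f j (s + c)| ^ p * ρ j (s + c)) := by
    filter_upwards [ae_restrict_of_ae_restrict_of_subset hA₁ hadm,
      ae_restrict_of_ae_restrict_of_subset hA₁ (hρ.pos i), hpos,
      ae_restrict_mem (hS.preimage (measurable_add_const c))] with s hadm hρi hρj hs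
    rw [hn s hs, show s + t - n = s + c by linarith] at hadm
    rw [Tleft_eq_tsum_of_nfl_eq P hc (hn s hs)]
    exact ofReal_abs_tsum_rpow_mul_le hp (fun j : Mset P n i => f j (s + c))
      (fun j : Mset P n i => ρ j (s + c)) (fun j => hρj j) hρi hK hadm
  calc ∫⁻ s in A, ENNReal.ofReal (|Tleft P f t i s| ^ p * ρ i s)
      ≤ ∫⁻ s in A, ENNReal.ofReal K *
          ∑' j : Mset P n i, ENNReal.ofReal (|f j (s + c)| ^ p * ρ j (s + c)) :=
        lintegral_mono_ae hpointwise
    _ = ENNReal.ofReal K *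
          ∑' j : Mset P n i, ∫⁻ s in A, ENNReal.ofReal (|f j (s + c)| ^ p * ρ j (s + c)) := by
        rw [lintegral_const_mul' _ _ ofReal_ne_top]
        congr 1
        exact lintegral_tsum fun j =>
          (hmeas j).comp_quasiMeasurePreserving hshift.quasiMeasurePreserving
    _ = ENNReal.ofReal K *
          ∑' j : Mset P n i, ∫⁻ x in S, ENNReal.ofReal (|f j x| ^ p * ρ j x) := by
        congr 1
        exact tsum_congr fun j =>
          (measurePreserving_add_right volume c).setLIntegral_comp_preimage_emb
            (measurableEmbedding_addRight c) (fun x => ENNReal.ofReal (|f j x| ^ p * ρ j x)) S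

end Pieces

section Translation

variable [Countable I] (P : I → Option I) {f ρ : I → ℝ → ℝ} {p t K : ℝ}

theorem aemeasurable_Tleft (ht : 0 ≤ t)
    (hf : ∀ j, AEMeasurable (f j) (volume.restrict (Icc 0 1))) (i : I) :
    AEMeasurable (Tleft P f t i) (volume.restrict (Icc 0 1)) := by
  have hτ₀ := Int.fract_nonneg t
  have hτ₁ := Int.fract_lt_one t
  rw [restrict_Icc_eq_restrict_Ico_union (b := 1 - Int.fract t) (by linarith) (by linarith),
    aemeasurable_union_iff, ← preimage_add_fract_Ico, ← preimage_add_fract_sub_one_Ico]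
  exact ⟨aemeasurable_Tleft_of_nfl_eq P measurableSet_Ico
      (fun j => (hf j).mono_set (Ico_subset_Icc_self.trans (Icc_subset_Icc_left hτ₀)))
      (natFloor_add_fract ht) (nfl_eq_natFloor ht) i,
    aemeasurable_Tleft_of_nfl_eq P measurableSet_Ico
      (fun j => (hf j).mono_set (Ico_subset_Icc_self.trans (Icc_subset_Icc_right hτ₁.le)))
      (by push_cast; linarith [natFloor_add_fract ht]) (nfl_eq_natFloor_add_one ht) i⟩

theorem pnorm_Tleft_le (hp : 1 < p) (hρ : IsWeight ρ) (hK : 0 ≤ K) (ht : 0 ≤ t)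
    (hf : ∀ j, AEMeasurable (f j) (volume.restrict (Icc 0 1)))
    (hadm : ∀ i, ∀ᵐ s ∂(volume.restrict (Icc (0 : ℝ) 1)),
      (∑' j : Mset P (nfl t s) i,
          ENNReal.ofReal ((ρ (j : I) (s + t - (nfl t s : ℝ))) ^ (-(1 / (p - 1))))) ^ (p - 1)
        ≤ ENNReal.ofReal (K / ρ i s)) :
    pnorm ρ p (Tleft P f t) ≤ ENNReal.ofReal K * pnorm ρ p f := by
  set τ := Int.fract t
  set G : I → ℝ → ℝ≥0∞ := fun j x => ENNReal.ofReal (|f j x| ^ p * ρ j x)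
  have hτ₀ : 0 ≤ τ := Int.fract_nonneg t
  have hτ₁ : τ < 1 := Int.fract_lt_one t
  have hsub : ∀ {a b : ℝ}, 0 ≤ a → b ≤ 1 → Ico a b ⊆ Icc 0 1 := fun ha hb =>
    Ico_subset_Icc_self.trans (Icc_subset_Icc ha hb)
  have left : ∀ i, ∫⁻ s in Ico 0 (1 - τ), ENNReal.ofReal (|Tleft P f t i s| ^ p * ρ i s) ≤
      ENNReal.ofReal K * ∑' j : Mset P ⌊t⌋₊ i, ∫⁻ x in Ico τ 1, G j x := fun i => by
    rw [← preimage_add_fract_Ico]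
    exact lintegral_Tleft_le_of_nfl_eq P hp hρ hK hf measurableSet_Ico (hsub hτ₀ le_rfl)
      (by rw [preimage_add_fract_Ico]; exact hsub le_rfl (by linarith))
      (natFloor_add_fract ht) (nfl_eq_natFloor ht) i (hadm i)
  have right : ∀ i, ∫⁻ s in Ico (1 - τ) 1, ENNReal.ofReal (|Tleft P f t i s| ^ p * ρ i s) ≤
      ENNReal.ofReal K * ∑' j : Mset P (⌊t⌋₊ + 1) i, ∫⁻ x in Ico 0 τ, G j x := fun i => by
    rw [← preimage_add_fract_sub_one_Ico]
    exact lintegral_Tleft_le_of_nfl_eq P hp hρ hK hf measurableSet_Ico (hsub le_rfl hτ₁.le)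
      (by rw [preimage_add_fract_sub_one_Ico]; exact hsub (by linarith) le_rfl)
      (by push_cast; linarith [natFloor_add_fract ht]) (nfl_eq_natFloor_add_one ht) i (hadm i)
  calc pnorm ρ p (Tleft P f t)
      = ∑' i, ((∫⁻ s in Ico 0 (1 - τ), ENNReal.ofReal (|Tleft P f t i s| ^ p * ρ i s)) +
          ∫⁻ s in Ico (1 - τ) 1, ENNReal.ofReal (|Tleft P f t i s| ^ p * ρ i s)) :=
        tsum_congr fun i =>
          setLIntegral_Icc_eq_add (sub_nonneg.2 hτ₁.le) (sub_le_self _ hτ₀) _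
    _ ≤ ∑' i, ENNReal.ofReal K * ((∑' j : Mset P ⌊t⌋₊ i, ∫⁻ x in Ico τ 1, G j x) +
          ∑' j : Mset P (⌊t⌋₊ + 1) i, ∫⁻ x in Ico 0 τ, G j x) :=
        ENNReal.tsum_le_tsum fun i =>
          (add_le_add (left i) (right i)).trans_eq (mul_add _ _ _).symm
    _ ≤ ENNReal.ofReal K * ((∑' j, ∫⁻ x in Ico τ 1, G j x) + ∑' j, ∫⁻ x in Ico 0 τ, G j x) := by
        rw [ENNReal.tsum_mul_left, ENNReal.tsum_add]
        exact mul_le_mul_right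
          (add_le_add (tsum_tsum_Mset_le P _ _) (tsum_tsum_Mset_le P _ _)) _
    _ = ENNReal.ofReal K * pnorm ρ p f := by
        rw [← ENNReal.tsum_add, pnorm]
        congr 1
        exact tsum_congr fun j => by rw [add_comm, setLIntegral_Icc_eq_add hτ₀ hτ₁.le]

end Translation

theorem enorm'_le_of_pnorm_le {ρ f g : I → ℝ → ℝ} {p C : ℝ} (hp : 0 < p) (hC : 0 ≤ C)
    (h : pnorm ρ p g ≤ ENNReal.ofReal (C ^ p) * pnorm ρ p f) :
    enorm' ρ p g ≤ ENNReal.ofReal C * enorm' ρ p f := by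
  have hp' : 0 ≤ 1 / p := one_div_nonneg.2 hp.le
  have := ENNReal.rpow_le_rpow h hp'
  rwa [ENNReal.mul_rpow_of_nonneg _ _ hp', ENNReal.ofReal_rpow_of_nonneg (by positivity) hp',
    ← Real.rpow_mul hC, mul_one_div_cancel hp.ne', Real.rpow_one] at this

theorem translation_bounded_Lp_general {I : Type*} [Countable I]
    (P : I → Option I) (p : ℝ) (hp : 1 < p)
    (ρ : I → ℝ → ℝ) (hρ : IsWeight ρ) (M w : ℝ) (hM : 1 ≤ M)
    (hadm : ∀ i, ∀ t ≥ (0 : ℝ), ∀ᵐ s ∂(volume.restrict (Set.Icc (0 : ℝ) 1)),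
      (∑' j : Mset P (nfl t s) i,
          ENNReal.ofReal ((ρ (j : I) (s + t - (nfl t s : ℝ))) ^ (-(1 / (p - 1))))) ^ (p - 1)
        ≤ ENNReal.ofReal (M ^ p * Real.exp (p * w * t) / ρ i s)) :
    ∀ t ≥ (0 : ℝ), ∀ f, memLprho ρ p f →
      memLprho ρ p (Tleft P f t) ∧
      enorm' ρ p (Tleft P f t) ≤ ENNReal.ofReal (M * Real.exp (w * t)) * enorm' ρ p f := by
  intro t ht f hf
  have hC : 0 ≤ M * Real.exp (w * t) := by positivity
  have hK : M ^ p * Real.exp (p * w * t) = (M * Real.exp (w * t)) ^ p := by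
    rw [Real.mul_rpow (by positivity) (Real.exp_pos _).le, ← Real.exp_mul, mul_comm (w * t),
      mul_assoc]
  have hbound := pnorm_Tleft_le P hp hρ (by positivity) ht hf.1 fun i => hadm i t ht
  rw [hK] at hbound
  exact ⟨⟨aemeasurable_Tleft P ht hf.1, hbound.trans_lt (mul_lt_top ofReal_lt_top hf.2)⟩,
    enorm'_le_of_pnorm_le (by linarith) hC hbound⟩

/-- **Proposition 2.2 (b), sufficiency**.  Let `1 < p < ∞`, `ρ` a weight on `L(G)`, `M ≥ 1`,
`w ∈ ℝ`, and assume that for all `i ∈ I`, all `t ≥ 0` and almost every `s ∈ [0,1]`,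
`(∑_{j ∈ M_{n(t,s)}(i)} ρ_j(s + t - n(t,s))^{-1/(p-1)})^{p-1} ≤ M^p e^{pwt} / ρ_i(s)`.
Then for every `t ≥ 0` and every `f ∈ L^p_ρ(L(G))`, the translated family `T_t f` belongs to
`L^p_ρ(L(G))` and `‖T_t f‖_{p,ρ} ≤ M e^{wt} ‖f‖_{p,ρ}`. -/
theorem translation_bounded_Lp {I : Type*} [Countable I] [Nonempty I]
    (P : I → Option I) (p : ℝ) (hp : 1 < p)
    (ρ : I → ℝ → ℝ) (hρ : IsWeight ρ) (M w : ℝ) (hM : 1 ≤ M)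
    (hadm : ∀ i, ∀ t ≥ (0 : ℝ), ∀ᵐ s ∂(volume.restrict (Set.Icc (0 : ℝ) 1)),
      (∑' j : Mset P (nfl t s) i,
          ENNReal.ofReal ((ρ (j : I) (s + t - (nfl t s : ℝ))) ^ (-(1 / (p - 1))))) ^ (p - 1)
        ≤ ENNReal.ofReal (M ^ p * Real.exp (p * w * t) / ρ i s)) :
    ∀ t ≥ (0 : ℝ), ∀ f, memLprho ρ p f →
      memLprho ρ p (Tleft P f t) ∧
      enorm' ρ p (Tleft P f t) ≤ ENNReal.ofReal (M * Real.exp (w * t)) * enorm' ρ p f :=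
  translation_bounded_Lp_general P p hp ρ hρ M w hM hadm

end
end

section
/- Let 1 ≤ p < ∞ and let ρ be a weight on a directed metric tree L(G) whose edge set I contains an edge i₀ with no child (i.e., there is no j ∈ I with P j = some i₀, so the head of e_{i₀} is a leaf of G). Then for every f ∈ L^p_ρ(L(G)) and every t > 1, (T_t f)_{i₀}(s) = 0 for all s ∈ [0,1]. Consequently, if the left translations {T_t}_{t≥0} form a C₀-semigroup on L^p_ρ(L(G)), this semigroup is not hypercyclic: no f ∈ L^p_ρ(L(G)) has dense orbit {T_t f : t ≥ 0}. -/
open MeasureTheory ENNReal Filter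

noncomputable section

variable {I : Type*}

/-- The translation semigroup `{T_t}_{t ≥ 0}` is hypercyclic on `L^p_ρ(L(G))`:
some `f` has dense orbit `{T_t f : t ≥ 0}`. -/
def Hypercyclic (P : I → Option I) (ρ : I → ℝ → ℝ) (p : ℝ) : Prop :=
  ∃ f, memLprho ρ p f ∧ ∀ g, memLprho ρ p g → ∀ ε > (0 : ℝ),
    ∃ t ≥ (0 : ℝ), pdist ρ p (Tleft P f t) g < ENNReal.ofReal ε

/-- The family of left translations `{T_t}_{t ≥ 0}` is a `C₀`-semigroup of bounded operators
on `L^p_ρ(L(G))`: each `T_t` maps `L^p_ρ` boundedly into itself, `T_0 = Id`,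
`T_{t+u} = T_t ∘ T_u`, and `t ↦ T_t f` is continuous on `[0,∞)` for every `f`
(identities and continuity taken in the `L^p_ρ`-(semi)metric). -/
def C0Semigroup (P : I → Option I) (ρ : I → ℝ → ℝ) (p : ℝ) : Prop :=
  (∀ t ≥ (0 : ℝ), ∀ f, memLprho ρ p f → memLprho ρ p (Tleft P f t)) ∧
  (∀ t ≥ (0 : ℝ), ∃ C : ℝ, 0 ≤ C ∧ ∀ f, memLprho ρ p f →
      enorm' ρ p (Tleft P f t) ≤ ENNReal.ofReal C * enorm' ρ p f) ∧
  (∀ f, memLprho ρ p f → pdist ρ p (Tleft P f 0) f = 0) ∧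
  (∀ t ≥ (0 : ℝ), ∀ u ≥ (0 : ℝ), ∀ f, memLprho ρ p f →
      pdist ρ p (Tleft P f (t + u)) (Tleft P (Tleft P f u) t) = 0) ∧
  (∀ f, memLprho ρ p f → ∀ t ≥ (0 : ℝ),
      Filter.Tendsto (fun u => pdist ρ p (Tleft P f u) (Tleft P f t))
        (nhdsWithin t (Set.Ici 0)) (nhds 0))

/-! A leaf edge `i₀` has no descendants, so `(T_t f)_{i₀}(s) = 0` once `s + t ≥ 1`.
A dense orbit would have to approach, in the weighted norm on the edge `i₀`, both the constant `1`
and the constant `2`. Approaching a nonzero constant forces the time `t` below `1/2`, and then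
`(T_t f)_{i₀}(r - t) = f_{i₀}(r)` for `r ∈ [1/2, 1)`; so `f_{i₀}` would be within `1/2` of both
`1` and `2` outside two small sets. Smallness is in Lebesgue measure, because an a.e. positive
integrable weight controls Lebesgue measure uniformly, and translations preserve Lebesgue measure.
-/

open Set

theorem exists_pos_measure_lt_of_setLIntegral_lt {α : Type*} [MeasurableSpace α]
    {μ : Measure α} [IsFiniteMeasure μ] {w : α → ℝ≥0∞} (hw : AEMeasurable w μ)
    (hw_ne_zero : ∀ᵐ x ∂μ, w x ≠ 0) (hw_ne_top : ∀ᵐ x ∂μ, w x ≠ ∞) {η : ℝ≥0∞} (hη : η ≠ 0) :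
    ∃ κ > 0, ∀ s, ∫⁻ x in s, w x ∂μ < κ → μ s < η := by
  -- `μ` has the density `w⁻¹`, integrable, with respect to `μ.withDensity w`.
  have hμ : (μ.withDensity w).withDensity (fun x ↦ (w x)⁻¹) = μ :=
    withDensity_inv_same₀ hw hw_ne_zero hw_ne_top
  have hfin : ∫⁻ x, (w x)⁻¹ ∂(μ.withDensity w) ≠ ∞ := by
    rw [← setLIntegral_univ, ← withDensity_apply' _ univ, hμ]
    exact measure_ne_top μ univ
  obtain ⟨κ, hκ, hlt⟩ := exists_pos_setLIntegral_lt_of_measure_lt hfin hη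
  refine ⟨κ, hκ, fun s hs ↦ ?_⟩
  rw [← withDensity_apply' w s] at hs
  simpa only [← withDensity_apply', hμ] using hlt s hs

theorem ofReal_rpow_mul_setLIntegral_le {α : Type*} [MeasurableSpace α] {μ : Measure α}
    {s : Set α} (hs : NullMeasurableSet s μ) {g w : α → ℝ} {a p : ℝ} (ha : 0 ≤ a) (hp : 0 ≤ p)
    (hag : ∀ x ∈ s, a ≤ g x) :
    ENNReal.ofReal (a ^ p) * ∫⁻ x in s, ENNReal.ofReal (w x) ∂μ
      ≤ ∫⁻ x, ENNReal.ofReal (g x ^ p * w x) ∂μ := by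
  rw [← lintegral_const_mul' _ _ ofReal_ne_top]
  refine le_trans ?_ (setLIntegral_le_lintegral s _)
  refine lintegral_mono_ae ((ae_restrict_mem₀ hs).mono fun x hx ↦ ?_)
  rw [ENNReal.ofReal_mul (Real.rpow_nonneg (ha.trans (hag x hx)) p)]
  gcongr
  exact hag x hx

section LeftTranslation

variable {P : I → Option I} {i₀ : I}

theorem pIter_succ_ne_of_leaf (hleaf : ∀ j, P j ≠ some i₀) (n : ℕ) (j : I) :
    pIter P (n + 1) j ≠ some i₀ := by
  induction n generalizing j with
  | zero => simpa [pIter] using hleaf j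
  | succ n ih =>
    cases h : P j with
    | none => simp [pIter, h]
    | some j' => simpa [pIter, h] using ih j'

theorem Tleft_eq_zero_of_leaf (hleaf : ∀ j, P j ≠ some i₀) (f : I → ℝ → ℝ) {t s : ℝ}
    (h : 1 ≤ s + t) : Tleft P f t i₀ s = 0 := by
  obtain ⟨n, hn⟩ : ∃ n, nfl t s = n + 1 :=
    Nat.exists_eq_add_of_le' (Nat.le_floor (by exact_mod_cast h))
  have hM : Mset P (n + 1) i₀ = ∅ :=
    eq_empty_of_forall_notMem (pIter_succ_ne_of_leaf hleaf n)
  rw [Tleft, hn, hM, tsum_empty]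

theorem Tleft_of_add_lt_one (P : I → Option I) (f : I → ℝ → ℝ) (i : I) {t s : ℝ}
    (h : s + t < 1) : Tleft P f t i s = f i (t + s) := by
  have hM : Mset P 0 i = {i} := by
    ext j
    simp [Mset, pIter]
  have hn : nfl t s = 0 := Nat.floor_eq_zero.mpr h
  rw [Tleft, hn, hM, Nat.cast_zero, sub_zero]
  exact tsum_singleton i fun j ↦ f j (t + s)

def deviationSet (P : I → Option I) (f : I → ℝ → ℝ) (t : ℝ) (i : I) (c : ℝ) : Set ℝ :=
  {s ∈ Icc 0 1 | 2⁻¹ ≤ |Tleft P f t i s - c|}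

theorem deviationSet_subset_Icc (P : I → Option I) (f : I → ℝ → ℝ) (t : ℝ) (i : I) (c : ℝ) :
    deviationSet P f t i c ⊆ Icc 0 1 :=
  sep_subset _ _

theorem Icc_subset_deviationSet_of_leaf (hleaf : ∀ j, P j ≠ some i₀) (f : I → ℝ → ℝ) {t c : ℝ}
    (ht : 2⁻¹ ≤ t) (hc : 2⁻¹ ≤ |c|) : Icc 2⁻¹ 1 ⊆ deviationSet P f t i₀ c := fun s hs ↦
  ⟨⟨by linarith [hs.1], hs.2⟩, by
    rwa [Tleft_eq_zero_of_leaf hleaf f (by linarith [hs.1]), zero_sub, abs_neg]⟩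

theorem ofReal_half_le_volume_deviationSet_add (hleaf : ∀ j, P j ≠ some i₀) (f : I → ℝ → ℝ)
    {t₁ t₂ c₁ c₂ : ℝ} (ht₁ : 0 ≤ t₁) (ht₂ : 0 ≤ t₂) (hc₁ : 2⁻¹ ≤ |c₁|) (hc₂ : 2⁻¹ ≤ |c₂|)
    (hc : 1 ≤ |c₁ - c₂|) :
    ENNReal.ofReal 2⁻¹ ≤
      volume (deviationSet P f t₁ i₀ c₁) + volume (deviationSet P f t₂ i₀ c₂) := by
  have hvol : volume (Icc (2⁻¹ : ℝ) 1) = ENNReal.ofReal 2⁻¹ := by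
    rw [Real.volume_Icc]; norm_num
  rcases le_or_gt 2⁻¹ t₁ with h₁ | h₁
  · exact hvol ▸ (measure_mono (Icc_subset_deviationSet_of_leaf hleaf f h₁ hc₁)).trans le_self_add
  rcases le_or_gt 2⁻¹ t₂ with h₂ | h₂
  · exact hvol ▸ (measure_mono (Icc_subset_deviationSet_of_leaf hleaf f h₂ hc₂)).trans le_add_self
  have htranslate : ∀ {t}, 0 ≤ t → t < 2⁻¹ → ∀ r ∈ Ico (2⁻¹ : ℝ) 1,
      r + -t ∈ Icc 0 1 ∧ Tleft P f t i₀ (r + -t) = f i₀ r := fun ht ht' r hr ↦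
    ⟨⟨by linarith [hr.1], by linarith [hr.2]⟩,
      by rw [Tleft_of_add_lt_one P f i₀ (by linarith [hr.2])]; ring_nf⟩
  have hcover : Ico (2⁻¹ : ℝ) 1 ⊆ (· + -t₁) ⁻¹' deviationSet P f t₁ i₀ c₁ ∪
      (· + -t₂) ⁻¹' deviationSet P f t₂ i₀ c₂ := by
    intro r hr
    obtain ⟨hmem₁, hT₁⟩ := htranslate ht₁ h₁ r hr
    obtain ⟨hmem₂, hT₂⟩ := htranslate ht₂ h₂ r hr
    by_cases hfar : 2⁻¹ ≤ |f i₀ r - c₁|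
    · exact Or.inl ⟨hmem₁, by rwa [hT₁]⟩
    · refine Or.inr ⟨hmem₂, ?_⟩
      rw [hT₂]
      have := abs_sub_le c₁ (f i₀ r) c₂
      rw [abs_sub_comm c₁ (f i₀ r)] at this
      linarith [not_le.mp hfar]
  calc ENNReal.ofReal 2⁻¹ = volume (Ico (2⁻¹ : ℝ) 1) := by rw [Real.volume_Ico]; norm_num
    _ ≤ _ := (measure_mono hcover).trans (measure_union_le _ _)
    _ = _ := by rw [measure_preimage_add_right, measure_preimage_add_right]

end LeftTranslation

theorem memLprho_single [DecidableEq I] {ρ : I → ℝ → ℝ} {p : ℝ} (hp : 0 < p) {i₀ : I}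
    (hρ : IntegrableOn (ρ i₀) (Icc 0 1)) (c : ℝ) :
    memLprho ρ p fun i _ ↦ (Pi.single i₀ c : I → ℝ) i := by
  refine ⟨fun _ ↦ aemeasurable_const, ?_⟩
  rw [pnorm, tsum_eq_single i₀ fun i hi ↦ by simp [hi, Real.zero_rpow hp.ne']]
  simpa only [Pi.single_eq_same] using (hρ.const_mul (|c| ^ p)).lintegral_lt_top

theorem exists_pnorm_sub_lt {P : I → Option I} {ρ : I → ℝ → ℝ} {p : ℝ} (hp : 0 < p)
    {f g : I → ℝ → ℝ}
    (hdense : ∀ g, memLprho ρ p g → ∀ ε > (0 : ℝ), ∃ t ≥ (0 : ℝ),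
      pdist ρ p (Tleft P f t) g < ENNReal.ofReal ε)
    (hg : memLprho ρ p g) {κ : ℝ≥0∞} (hκ : 0 < κ) :
    ∃ t ≥ (0 : ℝ), pnorm ρ p (fun i s ↦ Tleft P f t i s - g i s) < κ := by
  obtain ⟨ε, -, hε, hεκ⟩ := ENNReal.lt_iff_exists_real_btwn.mp
    (ENNReal.rpow_pos_of_nonneg hκ (inv_nonneg.mpr hp.le))
  obtain ⟨t, ht, hdist⟩ := hdense g hg ε (ENNReal.ofReal_pos.mp hε)
  refine ⟨t, ht, (ENNReal.rpow_lt_rpow_iff (inv_pos.mpr hp)).mp ?_⟩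
  rw [pdist, enorm', one_div] at hdist
  exact hdist.trans hεκ

theorem exists_volume_deviationSet_lt {P : I → Option I} {ρ : I → ℝ → ℝ} {p : ℝ} (hp : 0 < p)
    (hρ : IsWeight ρ)
    (hmaps : ∀ t ≥ (0 : ℝ), ∀ f, memLprho ρ p f → memLprho ρ p (Tleft P f t))
    {f : I → ℝ → ℝ} (hf : memLprho ρ p f)
    (hdense : ∀ g, memLprho ρ p g → ∀ ε > (0 : ℝ), ∃ t ≥ (0 : ℝ),
      pdist ρ p (Tleft P f t) g < ENNReal.ofReal ε)
    (i₀ : I) (c : ℝ) {η : ℝ≥0∞} (hη : η ≠ 0) :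
    ∃ t ≥ (0 : ℝ), volume (deviationSet P f t i₀ c) < η := by
  classical
  obtain ⟨κ, hκ, hsmall⟩ := exists_pos_measure_lt_of_setLIntegral_lt
    (μ := volume.restrict (Icc (0 : ℝ) 1)) (hρ.integrable i₀).aemeasurable.ennreal_ofReal
    ((hρ.pos i₀).mono fun s hs ↦ (ENNReal.ofReal_pos.mpr hs).ne')
    (ae_of_all _ fun _ ↦ ofReal_ne_top) hη
  have hm : ENNReal.ofReal (2⁻¹ ^ p) ≠ 0 := (ENNReal.ofReal_pos.mpr (by positivity)).ne'
  obtain ⟨t, ht, hnorm⟩ := exists_pnorm_sub_lt hp hdense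
    (memLprho_single hp (hρ.integrable i₀) c) (ENNReal.mul_pos hm hκ.ne')
  have hmeas : NullMeasurableSet (deviationSet P f t i₀ c) (volume.restrict (Icc 0 1)) :=
    measurableSet_Icc.nullMeasurableSet.inter
      (nullMeasurableSet_le aemeasurable_const (((hmaps t ht f hf).1 i₀).sub_const c).abs)
  refine ⟨t, ht, ?_⟩
  rw [← Measure.restrict_eq_self volume (deviationSet_subset_Icc P f t i₀ c)]
  refine hsmall _ ((ENNReal.mul_lt_mul_iff_right hm ofReal_ne_top).mp ?_)
  calc _ ≤ ∫⁻ s in Icc 0 1, ENNReal.ofReal (|Tleft P f t i₀ s - c| ^ p * ρ i₀ s) :=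
        ofReal_rpow_mul_setLIntegral_le hmeas (by norm_num) hp.le fun _ hs ↦ hs.2
    _ ≤ pnorm ρ p fun i s ↦ Tleft P f t i s - (Pi.single i₀ c : I → ℝ) i := by
        rw [pnorm]
        exact (ENNReal.le_tsum i₀).trans_eq' (by simp only [Pi.single_eq_same])
    _ < _ := hnorm

theorem not_hypercyclic_of_leaf_general {I : Type*}
    (P : I → Option I) (p : ℝ) (hp : 1 ≤ p)
    (ρ : I → ℝ → ℝ) (hρ : IsWeight ρ)
    (i₀ : I) (hleaf : ∀ j, P j ≠ some i₀) :
    (∀ f, memLprho ρ p f → ∀ t : ℝ, 1 < t → ∀ s ∈ Set.Icc (0 : ℝ) 1,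
      Tleft P f t i₀ s = 0) ∧
    (C0Semigroup P ρ p → ¬ Hypercyclic P ρ p) := by
  have hp₀ : 0 < p := by linarith
  refine ⟨fun f _ t ht s hs ↦ Tleft_eq_zero_of_leaf hleaf f (by linarith [hs.1]), ?_⟩
  rintro ⟨hmaps, -⟩ ⟨f, hf, hdense⟩
  have hη : ENNReal.ofReal 4⁻¹ ≠ 0 := by norm_num
  obtain ⟨t₁, ht₁, hdev₁⟩ := exists_volume_deviationSet_lt hp₀ hρ hmaps hf hdense i₀ 1 hη
  obtain ⟨t₂, ht₂, hdev₂⟩ := exists_volume_deviationSet_lt hp₀ hρ hmaps hf hdense i₀ 2 hη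
  have := (ofReal_half_le_volume_deviationSet_add hleaf f ht₁ ht₂ (c₁ := 1) (c₂ := 2)
    (by norm_num) (by norm_num) (by norm_num)).trans_lt (ENNReal.add_lt_add hdev₁ hdev₂)
  rw [← ENNReal.ofReal_add (by norm_num) (by norm_num),
    ENNReal.ofReal_lt_ofReal_iff (by norm_num)] at this
  norm_num at this

/-- **No hypercyclicity in the presence of a leaf**.  Let `1 ≤ p < ∞` and let `ρ` be a
weight on `L(G)` whose edge set contains an edge `i₀` with no child (its head is a leaf).
Then for every `f ∈ L^p_ρ(L(G))` and every `t > 1` one has `(T_t f)_{i₀}(s) = 0` for all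
`s ∈ [0,1]`; consequently, if the left translations form a `C₀`-semigroup on `L^p_ρ(L(G))`,
this semigroup is not hypercyclic. -/
theorem not_hypercyclic_of_leaf {I : Type*} [Countable I] [Nonempty I]
    (P : I → Option I) (p : ℝ) (hp : 1 ≤ p)
    (ρ : I → ℝ → ℝ) (hρ : IsWeight ρ)
    (i₀ : I) (hleaf : ∀ j, P j ≠ some i₀) :
    (∀ f, memLprho ρ p f → ∀ t : ℝ, 1 < t → ∀ s ∈ Set.Icc (0 : ℝ) 1,
      Tleft P f t i₀ s = 0) ∧
    (C0Semigroup P ρ p → ¬ Hypercyclic P ρ p) :=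
  not_hypercyclic_of_leaf_general P p hp ρ hρ i₀ hleaf
end
end
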